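/- arXiv:2304.07701 — 2 statements merged into one kernel-verified Lean document; each statement's English description precedes it below -/
import Mathlib

section
/- (Hyperplane covering over a domain) Let R be an integral domain, S_1,…,S_n finite subsets of R, E_k ⊆ S_k, and ψ_k : S_k → ℤ^+. Let L be a finite set and (H_λ)_{λ∈L} a family of hyperplanes of R^n (zero sets of degree-1 polynomials) such that ∏S_i ⊄ ∪_λ H_λ. Fix t ≥ 1 and assume every a ∈ (∏S_i) − (∏E_i) satisfies |{λ : a ∈ H_λ}| ≥ max{∑_i β_i : β ∈ ℕ^n, ∑_i ⌊β_i/ψ_i(a_i)⌋ ≤ t−1} + 1. Then for every m ∈ {1,…,n}: |L| ≥ (t−1)·∑_{u∈S_m−E_m} ψ_m(u) + ∑_{k=1}^n ∑_{u∈S_k−E_k} ψ_k(u). -/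
open MvPolynomial

namespace Stmt18

variable {R : Type*} [CommRing R] {n : ℕ}

/-- Translation `f(x) ↦ f(x + a)`. -/
noncomputable def tr (a : Fin n → R) : MvPolynomial (Fin n) R →ₐ[R] MvPolynomial (Fin n) R :=
  aeval (fun k => X k + C (a k))

lemma tr_X (a : Fin n → R) (k : Fin n) : tr a (X k) = X k + C (a k) := by simp [tr]

lemma tr_C (a : Fin n → R) (r : R) : tr a (C r) = C r := by
  simp [tr, MvPolynomial.algebraMap_eq]

lemma tr_tr (a b : Fin n → R) (f : MvPolynomial (Fin n) R) :
    tr a (tr b f) = tr (b + a) f := by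
  have h : (tr a).comp (tr b) = tr (b + a) := by
    apply MvPolynomial.algHom_ext
    intro k
    simp only [AlgHom.comp_apply, tr_X, map_add, tr_C, Pi.add_apply, map_add]
    ring
  calc tr a (tr b f) = ((tr a).comp (tr b)) f := rfl
    _ = tr (b + a) f := by rw [h]

lemma tr_zero (f : MvPolynomial (Fin n) R) : tr (0 : Fin n → R) f = f := by
  have h : tr (0 : Fin n → R) = AlgHom.id R _ := by
    apply MvPolynomial.algHom_ext; intro k; simp [tr_X]
  rw [h]; rfl

lemma constantCoeff_tr (a : Fin n → R) (f : MvPolynomial (Fin n) R) :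
    constantCoeff (tr a f) = eval a f := by
  have h : (constantCoeff.comp (tr a).toRingHom : MvPolynomial (Fin n) R →+* R)
      = eval a := by
    apply MvPolynomial.ringHom_ext
    · intro r; simp [tr_C]
    · intro k; simp [tr_X]
  calc constantCoeff (tr a f) = (constantCoeff.comp (tr a).toRingHom) f := rfl
    _ = eval a f := by rw [h]

lemma tr_monomial (a : Fin n → R) (γ : Fin n →₀ ℕ) (r : R) :
    tr a (monomial γ r) = C r * γ.prod fun k e => (X k + C (a k)) ^ e := by
  rw [monomial_eq, map_mul, tr_C]
  congr 1
  rw [map_finsuppProd]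
  exact Finsupp.prod_congr fun k _ => by rw [map_pow, tr_X]

lemma totalDegree_tr_le [Nontrivial R] (a : Fin n → R) (f : MvPolynomial (Fin n) R) :
    (tr a f).totalDegree ≤ f.totalDegree := by
  conv_lhs => rw [f.as_sum]
  rw [map_sum]
  refine le_trans (totalDegree_finset_sum _ _) ?_
  apply Finset.sup_le
  intro γ hγ
  rw [tr_monomial]
  refine le_trans (totalDegree_mul _ _) ?_
  rw [totalDegree_C, zero_add]
  rw [Finsupp.prod]
  refine le_trans (totalDegree_finset_prod _ _) ?_
  refine le_trans ?_ (le_totalDegree hγ)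
  rw [Finsupp.sum]
  apply Finset.sum_le_sum
  intro k _
  refine le_trans (totalDegree_pow _ _) ?_
  have h1 : (X k + C (a k) : MvPolynomial (Fin n) R).totalDegree ≤ 1 := by
    refine le_trans (totalDegree_add _ _) ?_
    rw [totalDegree_X, totalDegree_C]
    simp
  calc γ k * (X k + C (a k)).totalDegree ≤ γ k * 1 := Nat.mul_le_mul_left _ h1
    _ = γ k := Nat.mul_one _

lemma totalDegree_tr [Nontrivial R] (a : Fin n → R) (f : MvPolynomial (Fin n) R) :
    (tr a f).totalDegree = f.totalDegree := by
  refine le_antisymm (totalDegree_tr_le a f) ?_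
  have h := totalDegree_tr_le (-a) (tr a f)
  rwa [tr_tr, add_neg_cancel, tr_zero] at h

lemma eval_eq_zero_of_zero_not_mem_support (a : Fin n → R) (f : MvPolynomial (Fin n) R)
    (h : (0 : Fin n →₀ ℕ) ∉ (tr a f).support) : eval a f = 0 := by
  rw [← constantCoeff_tr, MvPolynomial.constantCoeff_eq]
  exact MvPolynomial.notMem_support_iff.mp h

lemma degreeOf_tr_le [Nontrivial R] (a : Fin n → R) (j : Fin n) (haj : a j = 0)
    (f : MvPolynomial (Fin n) R) : degreeOf j (tr a f) ≤ degreeOf j f := by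
  rw [degreeOf_le_iff]
  intro γ hγ
  have hsub : (tr a f).support ⊆
      f.support.biUnion fun δ => (tr a (monomial δ (coeff δ f))).support := by
    intro x hx
    rw [show tr a f = ∑ δ ∈ f.support, tr a (monomial δ (coeff δ f)) by
      conv_lhs => rw [f.as_sum]
      rw [map_sum]] at hx
    exact MvPolynomial.support_sum hx
  obtain ⟨δ, hδ, hmem⟩ := Finset.mem_biUnion.mp (hsub hγ)
  have hb : degreeOf j (tr a (monomial δ (coeff δ f))) ≤ δ j := by
    rw [tr_monomial]
    refine le_trans (degreeOf_mul_le _ _ _) ?_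
    rw [degreeOf_C, zero_add, Finsupp.prod]
    have key : ∀ s : Finset (Fin n), degreeOf j (∏ k ∈ s, (X k + C (a k)) ^ δ k)
        ≤ ∑ k ∈ s, (if j = k then δ k else 0) := by
      intro s
      induction s using Finset.induction with
      | empty =>
        simp only [Finset.prod_empty, Finset.sum_empty]
        rw [show (1 : MvPolynomial (Fin n) R) = C 1 by simp, degreeOf_C]
      | insert k s' hnotmem ih =>
        rw [Finset.prod_insert hnotmem, Finset.sum_insert hnotmem]
        refine le_trans (degreeOf_mul_le _ _ _) (add_le_add ?_ ih)
        refine le_trans (degreeOf_pow_le _ _ _) ?_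
        by_cases hk : j = k
        · subst hk
          rw [if_pos rfl, haj]
          simp [degreeOf_X]
        · rw [if_neg hk]
          have h0 : degreeOf j (X k + C (a k)) = 0 := by
            refine Nat.le_zero.mp (le_trans (degreeOf_add_le _ _ _) ?_)
            rw [degreeOf_C, degreeOf_X, if_neg hk]
            simp
          rw [h0, Nat.mul_zero]
    refine le_trans (key δ.support) ?_
    rw [Finset.sum_ite_eq δ.support j δ]
    split
    · exact le_refl _
    · exact Nat.zero_le _
  have h1 := (degreeOf_le_iff.mp hb) γ hmem
  refine le_trans h1 ?_
  -- δ j ≤ degreeOf j f since δ ∈ f.support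
  exact le_trans (le_refl _) (monomial_le_degreeOf j hδ)


/-- Embedding of univariate polynomials via the variable `X j`. -/
noncomputable def emb (j : Fin n) : Polynomial R →ₐ[R] MvPolynomial (Fin n) R :=
  Polynomial.aeval (X j)

/-- The coefficient of `x'^γ` (as a polynomial in `x_j`), where `γ j = 0` is intended. -/
noncomputable def U (j : Fin n) (γ : Fin n →₀ ℕ) (f : MvPolynomial (Fin n) R) : Polynomial R :=
  ∑ d ∈ Finset.range (f.totalDegree + 1),
    Polynomial.monomial d (coeff (γ + Finsupp.single j d) f)

lemma sum_single_add (γ : Fin n →₀ ℕ) (j : Fin n) (d : ℕ) :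
    ((γ + Finsupp.single j d).sum fun _ e => e) = (γ.sum fun _ e => e) + d := by
  classical
  rw [Finsupp.sum_add_index' (fun _ => rfl) (fun _ _ _ => rfl)]
  rw [Finsupp.sum_single_index rfl]

lemma U_coeff (j : Fin n) (γ : Fin n →₀ ℕ) (f : MvPolynomial (Fin n) R) (d : ℕ) :
    (U j γ f).coeff d = coeff (γ + Finsupp.single j d) f := by
  classical
  rw [U, Polynomial.finset_sum_coeff]
  simp only [Polynomial.coeff_monomial]
  rw [Finset.sum_ite_eq' (Finset.range (f.totalDegree + 1)) d
    (fun d => coeff (γ + Finsupp.single j d) f)]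
  split
  · rfl
  · rename_i hd
    rw [Finset.mem_range, not_lt] at hd
    refine (MvPolynomial.coeff_eq_zero_of_totalDegree_lt ?_).symm
    have h1 : f.totalDegree + 1 ≤ d := hd
    have h2 : ((γ + Finsupp.single j d).sum fun _ e => e) ≥ d := by
      rw [sum_single_add]; omega
    have h3 : ((γ + Finsupp.single j d).sum fun _ e => e)
        = ∑ i ∈ (γ + Finsupp.single j d).support, (γ + Finsupp.single j d) i := rfl
    omega

lemma U_add (j : Fin n) (γ : Fin n →₀ ℕ) (f g : MvPolynomial (Fin n) R) :
    U j γ (f + g) = U j γ f + U j γ g := by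
  ext d
  simp [U_coeff, MvPolynomial.coeff_add]

lemma U_zero (j : Fin n) (γ : Fin n →₀ ℕ) : U j γ (0 : MvPolynomial (Fin n) R) = 0 := by
  ext d; simp [U_coeff]

lemma U_sum {α : Type*} (j : Fin n) (γ : Fin n →₀ ℕ) (s : Finset α)
    (F : α → MvPolynomial (Fin n) R) :
    U j γ (∑ x ∈ s, F x) = ∑ x ∈ s, U j γ (F x) := by
  classical
  induction s using Finset.induction with
  | empty => simp [U_zero]
  | insert x s' hx ih => rw [Finset.sum_insert hx, Finset.sum_insert hx, U_add, ih]

lemma emb_monomial (j : Fin n) (i : ℕ) (c : R) :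
    emb j (Polynomial.monomial i c) = monomial (Finsupp.single j i) c := by
  rw [emb, Polynomial.aeval_monomial, X_pow_eq_monomial]
  rw [show (algebraMap R (MvPolynomial (Fin n) R)) c = C c from rfl, C_mul_monomial, mul_one]

lemma single_le_add_single (γ : Fin n →₀ ℕ) (j : Fin n) (hγ : γ j = 0) (i d : ℕ) :
    Finsupp.single j i ≤ γ + Finsupp.single j d ↔ i ≤ d := by
  classical
  constructor
  · intro h
    have := (Finsupp.le_iff _ _).mp h
    by_cases hi : i = 0
    · omega
    · have hj := this j (by simp [Finsupp.mem_support_iff, hi])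
      simpa [hγ] using hj
  · intro h
    rw [Finsupp.le_iff]
    intro k hk
    rcases Finsupp.mem_support_iff.mp hk with hne
    have : k = j := by
      by_contra hkj
      exact hne (Finsupp.single_eq_of_ne' (fun he => hkj he.symm) )
    subst this
    simpa [hγ] using h

lemma add_single_sub_single (γ : Fin n →₀ ℕ) (j : Fin n) (hγ : γ j = 0) (i d : ℕ) (h : i ≤ d) :
    γ + Finsupp.single j d - Finsupp.single j i = γ + Finsupp.single j (d - i) := by
  classical
  ext k
  by_cases hk : k = j
  · subst hk
    simp [Finsupp.single_eq_same, hγ]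
  · simp [Finsupp.single_eq_of_ne' (fun he => hk he.symm)]

lemma U_emb_mul (j : Fin n) (γ : Fin n →₀ ℕ) (hγ : γ j = 0) (p : Polynomial R)
    (f : MvPolynomial (Fin n) R) :
    U j γ (emb j p * f) = p * U j γ f := by
  classical
  induction p using Polynomial.induction_on' with
  | add p q hp hq => rw [map_add, add_mul, U_add, hp, hq, add_mul]
  | monomial i c =>
    ext d
    rw [U_coeff, emb_monomial, MvPolynomial.coeff_monomial_mul']
    rw [show Polynomial.monomial i c = Polynomial.C c * Polynomial.X ^ i from
      (Polynomial.C_mul_X_pow_eq_monomial).symm]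
    rw [mul_comm (Polynomial.C c * Polynomial.X ^ i) (U j γ f), ← mul_assoc,
      Polynomial.coeff_mul_X_pow']
    simp only [single_le_add_single γ j hγ]
    split
    · rename_i h
      rw [Polynomial.coeff_mul_C, add_single_sub_single γ j hγ i d h, U_coeff]
      ring
    · rfl

lemma erase_add_single_self (j : Fin n) (δ : Fin n →₀ ℕ) :
    Finsupp.erase j δ + Finsupp.single j (δ j) = δ := Finsupp.erase_add_single j δ

lemma eq_iff_erase_single (j : Fin n) (γ δ : Fin n →₀ ℕ) (hγ : γ j = 0) (d : ℕ) :
    δ = γ + Finsupp.single j d ↔ (Finsupp.erase j δ = γ ∧ δ j = d) := by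
  classical
  constructor
  · intro h
    subst h
    constructor
    · ext k
      by_cases hk : k = j
      · subst hk; simp [Finsupp.erase_same, hγ]
      · simp [Finsupp.erase_ne hk, Finsupp.single_eq_of_ne' (fun he => hk he.symm)]
    · simp [hγ, Finsupp.single_eq_same]
  · rintro ⟨h1, h2⟩
    ext k
    by_cases hk : k = j
    · subst hk; simp [hγ, Finsupp.single_eq_same, h2]
    · have := DFunLike.congr_fun h1 k
      simp only [Finsupp.erase_ne hk] at this
      simp [this, Finsupp.single_eq_of_ne' (fun he => hk he.symm)]

lemma U_monomial (j : Fin n) (γ : Fin n →₀ ℕ) (hγ : γ j = 0) (δ : Fin n →₀ ℕ) (r : R) :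
    U j γ (monomial δ r) =
      if Finsupp.erase j δ = γ then Polynomial.monomial (δ j) r else 0 := by
  classical
  ext d
  rw [U_coeff, MvPolynomial.coeff_monomial]
  by_cases he : Finsupp.erase j δ = γ
  · rw [if_pos he, Polynomial.coeff_monomial]
    by_cases hd : δ j = d
    · rw [if_pos hd, if_pos]
      rw [eq_iff_erase_single j γ δ hγ d]
      exact ⟨he, hd⟩
    · rw [if_neg hd, if_neg]
      intro hcon
      exact hd ((eq_iff_erase_single j γ δ hγ d).mp hcon).2
  · rw [if_neg he, Polynomial.coeff_zero, if_neg]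
    intro hcon
    exact he ((eq_iff_erase_single j γ δ hγ d).mp hcon).1

lemma coeff_eq_U (j : Fin n) (δ : Fin n →₀ ℕ) (f : MvPolynomial (Fin n) R) :
    coeff δ f = (U j (Finsupp.erase j δ) f).coeff (δ j) := by
  rw [U_coeff]
  congr 1
  exact (erase_add_single_self j δ).symm


lemma erase_erase (j : Fin n) (δ : Fin n →₀ ℕ) :
    Finsupp.erase j (Finsupp.erase j δ) = Finsupp.erase j δ := by
  classical
  ext k
  by_cases hk : k = j
  · subst hk; simp [Finsupp.erase_same]
  · simp [Finsupp.erase_ne hk]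

lemma tr_single_monomial (j : Fin n) (c : R) (δ : Fin n →₀ ℕ) (r : R) :
    tr (Pi.single j c) (monomial δ r)
      = emb j ((Polynomial.X + Polynomial.C c) ^ δ j) * monomial (Finsupp.erase j δ) r := by
  classical
  have hsplit : monomial δ r
      = monomial (Finsupp.erase j δ) r * (X j : MvPolynomial (Fin n) R) ^ δ j := by
    rw [X_pow_eq_monomial, monomial_mul, mul_one, Finsupp.erase_add_single]
  rw [hsplit, map_mul, map_pow, tr_X, Pi.single_eq_same]
  have h1 : tr (Pi.single j c) (monomial (Finsupp.erase j δ) r)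
      = monomial (Finsupp.erase j δ) r := by
    rw [tr_monomial, monomial_eq]
    congr 1
    apply Finsupp.prod_congr
    intro k hk
    have hkj : k ≠ j := by
      rw [Finsupp.support_erase] at hk
      exact Finset.ne_of_mem_erase hk
    rw [Pi.single_eq_of_ne hkj]
    simp
  have h2 : (X j + C c : MvPolynomial (Fin n) R)
      = emb j (Polynomial.X + Polynomial.C c) := by
    rw [map_add]
    rw [show emb j (Polynomial.X : Polynomial R) = X j from Polynomial.aeval_X _]
    congr 1
    rw [show emb j (Polynomial.C c) = algebraMap R (MvPolynomial (Fin n) R) c from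
      Polynomial.aeval_C _ _]
    rfl
  rw [h1, h2, ← map_pow, mul_comm]

lemma U_tr_single (j : Fin n) (γ : Fin n →₀ ℕ) (hγ : γ j = 0) (c : R)
    (f : MvPolynomial (Fin n) R) :
    U j γ (tr (Pi.single j c) f) = Polynomial.taylor c (U j γ f) := by
  classical
  conv_lhs => rw [f.as_sum, map_sum]
  conv_rhs => rw [f.as_sum]
  rw [U_sum, U_sum, map_sum]
  apply Finset.sum_congr rfl
  intro δ _
  rw [tr_single_monomial, U_emb_mul j γ hγ, U_monomial j γ hγ (Finsupp.erase j δ), erase_erase,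
    U_monomial j γ hγ δ, apply_ite (Polynomial.taylor c), Polynomial.taylor_monomial, map_zero]
  by_cases he : Finsupp.erase j δ = γ
  · rw [if_pos he, if_pos he, Finsupp.erase_same, Polynomial.monomial_zero_left]
    ring
  · rw [if_neg he, if_neg he, mul_zero]

lemma tr_emb (j : Fin n) (b : Fin n → R) (hb : b j = 0) (p : Polynomial R) :
    tr b (emb j p) = emb j p := by
  induction p using Polynomial.induction_on' with
  | add p q hp hq => rw [map_add, map_add, hp, hq]
  | monomial i c =>
    rw [emb_monomial, tr_monomial, monomial_eq]
    congr 1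
    apply Finsupp.prod_congr
    intro k hk
    have hkj : k = j := by
      by_contra hkj
      rw [Finsupp.support_single_ne_zero] at hk
      · exact hkj (Finset.mem_singleton.mp hk)
      · intro h0
        rw [h0] at hk
        simp [Finsupp.support_single_ne_zero] at hk
    subst hkj
    rw [hb]
    simp

section Division

variable (j : Fin n) (σp : Polynomial R) (f : MvPolynomial (Fin n) R)

noncomputable def qd : MvPolynomial (Fin n) R :=
  ∑ γ ∈ f.support.image (Finsupp.erase j), emb j (U j γ f /ₘ σp) * monomial γ 1

noncomputable def rd : MvPolynomial (Fin n) R :=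
  ∑ γ ∈ f.support.image (Finsupp.erase j), emb j (U j γ f %ₘ σp) * monomial γ 1

variable {j σp f}

lemma mem_image_erase {γ : Fin n →₀ ℕ} (h : γ ∈ f.support.image (Finsupp.erase j)) :
    γ j = 0 ∧ Finsupp.erase j γ = γ := by
  classical
  obtain ⟨δ, _, rfl⟩ := Finset.mem_image.mp h
  exact ⟨Finsupp.erase_same, erase_erase j δ⟩

lemma U_eq_zero_of_not_mem {δ : Fin n →₀ ℕ} (hδ : δ j = 0)
    (h : δ ∉ f.support.image (Finsupp.erase j)) : U j δ f = 0 := by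
  classical
  ext d
  rw [U_coeff, Polynomial.coeff_zero]
  by_contra hc
  have hmem : δ + Finsupp.single j d ∈ f.support := MvPolynomial.mem_support_iff.mpr hc
  have he : Finsupp.erase j (δ + Finsupp.single j d) = δ :=
    ((eq_iff_erase_single j δ (δ + Finsupp.single j d) hδ d).mp rfl).1
  exact h (Finset.mem_image.mpr ⟨_, hmem, he⟩)

lemma U_qd (hm : σp.Monic) {δ : Fin n →₀ ℕ} (hδ : δ j = 0) :
    U j δ (qd j σp f) = U j δ f /ₘ σp := by
  classical
  rw [qd, U_sum]
  have hterm : ∀ γ ∈ f.support.image (Finsupp.erase j),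
      U j δ (emb j (U j γ f /ₘ σp) * monomial γ 1)
        = if γ = δ then U j γ f /ₘ σp else 0 := by
    intro γ hγ
    obtain ⟨hγj, hγe⟩ := mem_image_erase hγ
    rw [U_emb_mul j δ hδ, U_monomial j δ hδ, hγe]
    by_cases h : γ = δ
    · rw [if_pos h, if_pos h, hγj, Polynomial.monomial_zero_left, map_one, mul_one]
    · rw [if_neg h, if_neg h, mul_zero]
  rw [Finset.sum_congr rfl hterm, Finset.sum_ite_eq' _ δ (fun γ => U j γ f /ₘ σp)]
  split
  · rfl
  · rename_i h
    rw [U_eq_zero_of_not_mem hδ h, Polynomial.zero_divByMonic]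

lemma U_rd (hm : σp.Monic) {δ : Fin n →₀ ℕ} (hδ : δ j = 0) :
    U j δ (rd j σp f) = U j δ f %ₘ σp := by
  classical
  rw [rd, U_sum]
  have hterm : ∀ γ ∈ f.support.image (Finsupp.erase j),
      U j δ (emb j (U j γ f %ₘ σp) * monomial γ 1)
        = if γ = δ then U j γ f %ₘ σp else 0 := by
    intro γ hγ
    obtain ⟨hγj, hγe⟩ := mem_image_erase hγ
    rw [U_emb_mul j δ hδ, U_monomial j δ hδ, hγe]
    by_cases h : γ = δ
    · rw [if_pos h, if_pos h, hγj, Polynomial.monomial_zero_left, map_one, mul_one]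
    · rw [if_neg h, if_neg h, mul_zero]
  rw [Finset.sum_congr rfl hterm, Finset.sum_ite_eq' _ δ (fun γ => U j γ f %ₘ σp)]
  split
  · rfl
  · rename_i h
    rw [U_eq_zero_of_not_mem hδ h, Polynomial.zero_modByMonic]

lemma qd_add_rd (hm : σp.Monic) : emb j σp * qd j σp f + rd j σp f = f := by
  apply MvPolynomial.ext
  intro δ
  rw [MvPolynomial.coeff_add, coeff_eq_U j δ (emb j σp * qd j σp f), coeff_eq_U j δ (rd j σp f),
    coeff_eq_U j δ f]
  have hδ0 : (Finsupp.erase j δ) j = 0 := Finsupp.erase_same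
  rw [U_emb_mul j _ hδ0, U_qd hm hδ0, U_rd hm hδ0, ← Polynomial.coeff_add]
  congr 1
  rw [add_comm]
  exact Polynomial.modByMonic_add_div _ σp

lemma rd_supp (hm : σp.Monic) (hne : σp ≠ 1) {δ : Fin n →₀ ℕ}
    (hδs : δ ∈ (rd j σp f).support) : δ j < σp.natDegree := by
  have hc : coeff δ (rd j σp f) ≠ 0 := MvPolynomial.mem_support_iff.mp hδs
  rw [coeff_eq_U j δ, U_rd hm Finsupp.erase_same] at hc
  exact lt_of_le_of_lt (Polynomial.le_natDegree_of_ne_zero hc)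
    (Polynomial.natDegree_modByMonic_lt _ hm hne)

lemma qd_supp [Nontrivial R] (hm : σp.Monic) {δ : Fin n →₀ ℕ}
    (hδs : δ ∈ (qd j σp f).support) :
    (δ.sum fun _ e => e) + σp.natDegree ≤ f.totalDegree := by
  classical
  set γ := Finsupp.erase j δ with hγdef
  have hγ0 : γ j = 0 := Finsupp.erase_same
  have hc : (U j γ f /ₘ σp).coeff (δ j) ≠ 0 := by
    have h1 : coeff δ (qd j σp f) ≠ 0 := MvPolynomial.mem_support_iff.mp hδs
    rwa [coeff_eq_U j δ, U_qd hm hγ0] at h1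
  have hPne : U j γ f ≠ 0 := by
    intro h0
    rw [h0, Polynomial.zero_divByMonic] at hc
    simp at hc
  have hq0 : U j γ f /ₘ σp ≠ 0 := by
    intro h0; rw [h0] at hc; simp at hc
  have hWle : σp.natDegree ≤ (U j γ f).natDegree := by
    by_contra hlt
    push_neg at hlt
    apply hq0
    rw [Polynomial.divByMonic_eq_zero_iff hm]
    calc (U j γ f).degree ≤ ((U j γ f).natDegree : WithBot ℕ) := Polynomial.degree_le_natDegree
      _ < (σp.natDegree : WithBot ℕ) := by exact_mod_cast hlt
      _ = σp.degree := (Polynomial.degree_eq_natDegree hm.ne_zero).symm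
  have hdeg := Polynomial.natDegree_divByMonic (U j γ f) hm
  have hdj : δ j ≤ (U j γ f).natDegree - σp.natDegree := by
    rw [← hdeg]; exact Polynomial.le_natDegree_of_ne_zero hc
  have hlead : coeff (γ + Finsupp.single j ((U j γ f).natDegree)) f ≠ 0 := by
    rw [← U_coeff]
    exact Polynomial.leadingCoeff_ne_zero.mpr hPne
  have hle := MvPolynomial.le_totalDegree (MvPolynomial.mem_support_iff.mpr hlead)
  rw [show ((γ + Finsupp.single j ((U j γ f).natDegree)).sum fun _ e => e)
      = (γ.sum fun _ e => e) + (U j γ f).natDegree from sum_single_add _ _ _] at hle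
  have hδsum : (δ.sum fun _ e => e) = (γ.sum fun _ e => e) + δ j := by
    conv_lhs => rw [← erase_add_single_self j δ]
    rw [sum_single_add]
  omega

end Division


lemma sumdeg_add (a b : Fin n →₀ ℕ) :
    ((a + b).sum fun _ e => e) = (a.sum fun _ e => e) + (b.sum fun _ e => e) := by
  classical
  rw [Finsupp.sum_add_index' (fun _ => rfl) (fun _ _ _ => rfl)]

lemma sumdeg_eq_zero_iff (γ : Fin n →₀ ℕ) : (γ.sum fun _ e => e) = 0 ↔ γ = 0 := by
  classical
  constructor
  · intro h
    ext k
    rw [Finsupp.sum] at h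
    rw [Finset.sum_eq_zero_iff_of_nonneg (fun _ _ => Nat.zero_le _)] at h
    by_cases hk : k ∈ γ.support
    · exact h k hk
    · simpa [Finsupp.mem_support_iff, not_not] using hk
  · intro h; subst h; simp

/-- If the support of `g * h` avoids a downward-closed set and `g` has nonzero
constant coefficient, then the support of `h` avoids it too. -/
lemma support_mul_avoid [IsDomain R] (g h : MvPolynomial (Fin n) R)
    (low : (Fin n →₀ ℕ) → Prop) (hdown : ∀ γ δ, low γ → δ ≤ γ → low δ)
    (hgh : ∀ γ ∈ (g * h).support, ¬ low γ)
    (hg0 : constantCoeff g ≠ 0) :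
    ∀ δ ∈ h.support, ¬ low δ := by
  classical
  by_contra hcon
  push_neg at hcon
  obtain ⟨δ0, hδ0s, hδ0l⟩ := hcon
  obtain ⟨δ, hδB, hδmin⟩ := Finset.exists_min_image (h.support.filter low)
    (fun γ => γ.sum fun _ e => e) ⟨δ0, Finset.mem_filter.mpr ⟨hδ0s, hδ0l⟩⟩
  obtain ⟨hδs, hδl⟩ := Finset.mem_filter.mp hδB
  have hcoeff : coeff δ (g * h) = constantCoeff g * coeff δ h := by
    rw [MvPolynomial.coeff_mul]
    rw [Finset.sum_eq_single_of_mem ((0 : Fin n →₀ ℕ), δ)]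
    · rw [MvPolynomial.constantCoeff_eq]
    · rw [Finset.HasAntidiagonal.mem_antidiagonal]; simp
    · rintro ⟨b1, b2⟩ hb hne
      rw [Finset.HasAntidiagonal.mem_antidiagonal] at hb
      have hb' : b1 + b2 = δ := hb
      have hb1 : b1 ≠ 0 := by
        intro h0
        apply hne
        have hb2 : b2 = δ := by rw [← hb', h0, zero_add]
        rw [h0, hb2]
      have hb2low : low b2 := by
        refine hdown δ b2 hδl ?_
        rw [← hb']
        exact le_add_self
      have hb2lt : (b2.sum fun _ e => e) < δ.sum fun _ e => e := by
        rw [← hb', sumdeg_add]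
        have : (b1.sum fun _ e => e) ≠ 0 := fun h0 => hb1 ((sumdeg_eq_zero_iff b1).mp h0)
        omega
      have hb2 : coeff b2 h = 0 := by
        by_contra hc
        have : b2 ∈ h.support.filter low :=
          Finset.mem_filter.mpr ⟨MvPolynomial.mem_support_iff.mpr hc, hb2low⟩
        exact absurd (hδmin b2 this) (by omega)
      rw [hb2, mul_zero]
  have hne : coeff δ (g * h) ≠ 0 := by
    rw [hcoeff]
    exact mul_ne_zero hg0 (MvPolynomial.mem_support_iff.mp hδs)
  exact (hgh δ (MvPolynomial.mem_support_iff.mpr hne)) hδl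

/-- Support of a product of polynomials vanishing at the origin consists of
multidegrees of total degree at least the number of factors. -/
lemma support_prod_card {α : Type*} [DecidableEq α] (s : Finset α)
    (F : α → MvPolynomial (Fin n) R) (hF : ∀ i ∈ s, constantCoeff (F i) = 0) :
    ∀ γ ∈ (∏ i ∈ s, F i).support, s.card ≤ γ.sum fun _ e => e := by
  classical
  induction s using Finset.induction with
  | empty => intro γ _; simp
  | insert a s' hx ih =>
    intro γ hγ
    rw [Finset.prod_insert hx] at hγ
    obtain ⟨α1, hα1, β1, hβ1, hsum⟩ := Finset.mem_add.mp (MvPolynomial.support_mul _ _ hγ)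
    have hα1ne : α1 ≠ 0 := by
      intro h0
      rw [h0] at hα1
      have := MvPolynomial.mem_support_iff.mp hα1
      rw [← MvPolynomial.constantCoeff_eq] at this
      exact this (hF a (Finset.mem_insert_self a s'))
    have h1 : 1 ≤ α1.sum fun _ e => e := by
      rcases Nat.eq_zero_or_pos (α1.sum fun _ e => e) with h0 | h
      · exact absurd ((sumdeg_eq_zero_iff α1).mp h0) hα1ne
      · exact h
    have h2 := ih (fun i hi => hF i (Finset.mem_insert_of_mem hi)) β1 hβ1
    rw [Finset.card_insert_of_notMem hx, ← hsum, sumdeg_add]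
    omega

section Univariate

lemma X_sub_C_pow_dvd_of_taylor [Nontrivial R] (p : Polynomial R) (v : R) (c : ℕ)
    (h : ∀ d < c, (Polynomial.taylor v p).coeff d = 0) :
    (Polynomial.X - Polynomial.C v) ^ c ∣ p := by
  have hX : (Polynomial.X : Polynomial R) ^ c ∣ Polynomial.taylor v p :=
    Polynomial.X_pow_dvd_iff.mpr h
  obtain ⟨g, hg⟩ := hX
  have hp : p = Polynomial.taylor (-v) (Polynomial.taylor v p) := by
    rw [Polynomial.taylor_taylor]
    simp
  rw [hp, hg]
  rw [show Polynomial.taylor (-v) (Polynomial.X ^ c * g)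
      = (Polynomial.X - Polynomial.C v) ^ c * Polynomial.taylor (-v) g by
    rw [Polynomial.taylor_apply, Polynomial.mul_comp, Polynomial.pow_comp,
      Polynomial.X_comp, Polynomial.taylor_apply, map_neg, sub_eq_add_neg]]
  exact Dvd.intro _ rfl

lemma X_sub_C_dvd_imp_eq [IsDomain R] (u v : R)
    (h : (Polynomial.X - Polynomial.C u) ∣ (Polynomial.X - Polynomial.C v)) : u = v := by
  obtain ⟨s, hs⟩ := h
  have h2 := congrArg (Polynomial.eval u) hs
  simp only [Polynomial.eval_mul, Polynomial.eval_sub, Polynomial.eval_X, Polynomial.eval_C,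
    sub_self, zero_mul] at h2
  exact (sub_eq_zero.mp h2)

lemma prod_X_sub_C_pow_dvd [IsDomain R] (V : Finset R) (c : R → ℕ) (p : Polynomial R)
    (h : ∀ v ∈ V, (Polynomial.X - Polynomial.C v) ^ (c v) ∣ p) :
    (∏ v ∈ V, (Polynomial.X - Polynomial.C v) ^ (c v)) ∣ p := by
  classical
  induction V using Finset.induction generalizing p with
  | empty => simp
  | insert v V' hx ih =>
    rw [Finset.prod_insert hx]
    obtain ⟨m, rfl⟩ := h v (Finset.mem_insert_self v V')
    refine mul_dvd_mul_left _ (ih m ?_)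
    intro u hu
    have hne : u ≠ v := fun he => hx (he ▸ hu)
    have hdvd := h u (Finset.mem_insert_of_mem hu)
    refine (Prime.pow_dvd_of_dvd_mul_left (Polynomial.prime_X_sub_C u) _ ?_ hdvd)
    intro hcon
    have := (Polynomial.prime_X_sub_C u).dvd_of_dvd_pow hcon
    exact hne (X_sub_C_dvd_imp_eq u v this)

end Univariate


section Main

variable [IsDomain R] [DecidableEq R]

/-- `f` vanishes at `a` with `(ψ,t)`-multiplicity. -/
def Van (ψ : Fin n → R → ℕ) (t : ℕ) (f : MvPolynomial (Fin n) R) (a : Fin n → R) : Prop :=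
  ∀ γ ∈ (tr a f).support, t ≤ ∑ k, γ k / ψ k (a k)

lemma eval_emb (w : Fin n → R) (j : Fin n) (p : Polynomial R) :
    eval w (emb j p) = p.eval (w j) := by
  induction p using Polynomial.induction_on' with
  | add p q hp hq => simp [hp, hq]
  | monomial i c =>
    rw [emb_monomial, eval_monomial]
    have h1 : ((Finsupp.single j i).prod fun k e => w k ^ e) = w j ^ i :=
      Finsupp.prod_single_index (pow_zero (w j))
    rw [h1]
    simp [Polynomial.eval_monomial]

lemma update_eq_add_single (a : Fin n → R) (j : Fin n) (v : R) :
    Function.update a j 0 + Pi.single j v = Function.update a j v := by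
  funext k
  by_cases hk : k = j
  · subst hk; simp
  · simp [Function.update_of_ne hk, Pi.single_eq_of_ne hk]

lemma eval_vanish_of_van {ψ : Fin n → R → ℕ} {t : ℕ} (ht : 1 ≤ t)
    {f : MvPolynomial (Fin n) R} {a : Fin n → R} (hv : Van ψ t f a) : eval a f = 0 := by
  apply eval_eq_zero_of_zero_not_mem_support
  intro h0
  have := hv 0 h0
  simp at this
  omega

/-- Key structural lemma: the remainder of `f` upon division by
`σ = ∏_{v ∈ S j \ E j} (X j - v)^{ψ j v}` vanishes to `(ψ,t)`-multiplicity,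
computed ignoring coordinate `j`, at every point whose off-`j` coordinates
lie in the grid. -/
lemma rd_high (j : Fin n) (S E : Fin n → Finset R) (ψ : Fin n → R → ℕ) (t : ℕ)
    (f : MvPolynomial (Fin n) R)
    (hvanV : ∀ v ∈ S j \ E j, ∀ a : Fin n → R,
      (∀ k, k ≠ j → a k ∈ S k) → a j = v → Van ψ t f a)
    (hW : 1 ≤ ∑ v ∈ S j \ E j, ψ j v)
    (hψV : ∀ v ∈ S j \ E j, 0 < ψ j v) :
    ∀ a : Fin n → R, (∀ k, k ≠ j → a k ∈ S k) →
      ∀ γ ∈ (tr a (rd j (∏ v ∈ S j \ E j, (Polynomial.X - Polynomial.C v) ^ ψ j v) f)).support,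
        t ≤ ∑ k ∈ Finset.univ.erase j, γ k / ψ k (a k) := by
  classical
  set V := S j \ E j with hV
  set σp := ∏ v ∈ V, (Polynomial.X - Polynomial.C v) ^ ψ j v with hσ
  have hmon : σp.Monic :=
    Polynomial.monic_prod_of_monic _ _ (fun v _ => (Polynomial.monic_X_sub_C v).pow _)
  have hdeg : σp.natDegree = ∑ v ∈ V, ψ j v := by
    rw [hσ, Polynomial.natDegree_prod]
    · apply Finset.sum_congr rfl
      intro v _
      rw [Polynomial.natDegree_pow, Polynomial.natDegree_X_sub_C, mul_one]
    · intro v _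
      exact ((Polynomial.monic_X_sub_C v).pow _).ne_zero
  have hσne1 : σp ≠ 1 := by
    intro h1
    rw [h1, Polynomial.natDegree_one] at hdeg
    omega
  intro a ha
  set b := Function.update a j 0 with hb
  have hbj : b j = 0 := Function.update_self j 0 a
  -- Step A : for suitable γ', σp divides U j γ' (tr b f)
  have stepA : ∀ γ' : Fin n →₀ ℕ, γ' j = 0 →
      (∑ k ∈ Finset.univ.erase j, γ' k / ψ k (a k)) < t →
      σp ∣ U j γ' (tr b f) := by
    intro γ' hγ'j hs
    set s := ∑ k ∈ Finset.univ.erase j, γ' k / ψ k (a k) with hsdef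
    apply prod_X_sub_C_pow_dvd
    intro v hv
    have hvlift : (Polynomial.X - Polynomial.C v) ^ ((t - s) * ψ j v) ∣ U j γ' (tr b f) := by
      apply X_sub_C_pow_dvd_of_taylor
      intro d hd
      rw [← U_tr_single j γ' hγ'j v (tr b f), tr_tr, update_eq_add_single a j v, U_coeff]
      by_contra hc
      have hmem := MvPolynomial.mem_support_iff.mpr hc
      have hvan := hvanV v hv (Function.update a j v)
        (fun k hk => by rw [Function.update_of_ne hk]; exact ha k hk)
        (Function.update_self j v a)
      have hge := hvan _ hmem
      -- compute the sum
      have hsum : (∑ k, (γ' + Finsupp.single j d) k / ψ k (Function.update a j v k))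
          = s + d / ψ j v := by
        rw [← Finset.sum_erase_add _ _ (Finset.mem_univ j)]
        congr 1
        · rw [hsdef]
          apply Finset.sum_congr rfl
          intro k hk
          have hkj := Finset.ne_of_mem_erase hk
          rw [Finsupp.add_apply, Finsupp.single_eq_of_ne' (fun he => hkj he.symm),
            Function.update_of_ne hkj, Nat.add_zero]
        · rw [Finsupp.add_apply, Finsupp.single_eq_same, hγ'j, Function.update_self, Nat.zero_add]
      rw [hsum] at hge
      have hdiv : t - s ≤ d / ψ j v := by omega
      have := (Nat.le_div_iff_mul_le (hψV v hv)).mp hdiv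
      omega
    refine dvd_trans (pow_dvd_pow _ ?_) hvlift
    have : 1 ≤ t - s := by omega
    calc ψ j v = 1 * ψ j v := (Nat.one_mul _).symm
      _ ≤ (t - s) * ψ j v := Nat.mul_le_mul_right _ this
  -- Step B : division commutes with translation by b
  have stepB : ∀ γ' : Fin n →₀ ℕ, γ' j = 0 →
      U j γ' (tr b (rd j σp f)) = U j γ' (tr b f) %ₘ σp := by
    intro γ' hγ'j
    have hsplit : tr b f = emb j σp * tr b (qd j σp f) + tr b (rd j σp f) := by
      conv_lhs => rw [← qd_add_rd (f := f) (j := j) (σp := σp) hmon]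
      rw [map_add, map_mul, tr_emb j b hbj]
    have hUsplit : U j γ' (tr b f)
        = σp * U j γ' (tr b (qd j σp f)) + U j γ' (tr b (rd j σp f)) := by
      rw [hsplit, U_add, U_emb_mul j γ' hγ'j]
    have hdeglt : (U j γ' (tr b (rd j σp f))).degree < σp.degree := by
      have h1 : (U j γ' (tr b (rd j σp f))).degree < (σp.natDegree : WithBot ℕ) := by
        rw [Polynomial.degree_lt_iff_coeff_zero]
        intro d hd
        rw [U_coeff]
        by_contra hc
        have hmem := MvPolynomial.mem_support_iff.mpr hc
        have hdjle : (γ' + Finsupp.single j d) j ≤ degreeOf j (tr b (rd j σp f)) :=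
          degreeOf_le_iff.mp (le_refl _) _ hmem
        have h2 : degreeOf j (tr b (rd j σp f)) ≤ degreeOf j (rd j σp f) :=
          degreeOf_tr_le b j hbj _
        have h3 : degreeOf j (rd j σp f) < σp.natDegree := by
          rw [degreeOf_lt_iff (by omega)]
          intro δ hδ
          exact rd_supp hmon hσne1 hδ
        have h4 : (γ' + Finsupp.single j d) j = d := by
          rw [Finsupp.add_apply, Finsupp.single_eq_same, hγ'j, Nat.zero_add]
        rw [h4] at hdjle
        have : (σp.natDegree : ℕ) ≤ d := by exact_mod_cast hd
        omega
      rwa [Polynomial.degree_eq_natDegree hmon.ne_zero]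
    exact ((Polynomial.div_modByMonic_unique (U j γ' (tr b (qd j σp f)))
      (U j γ' (tr b (rd j σp f))) hmon ⟨by rw [hUsplit]; ring, hdeglt⟩).2).symm
  -- Step C/D : conclude
  intro γ hγmem
  by_contra hcon
  push_neg at hcon
  have hγ'j : (Finsupp.erase j γ) j = 0 := Finsupp.erase_same
  have hsums : (∑ k ∈ Finset.univ.erase j, (Finsupp.erase j γ) k / ψ k (a k))
      = ∑ k ∈ Finset.univ.erase j, γ k / ψ k (a k) := by
    apply Finset.sum_congr rfl
    intro k hk
    rw [Finsupp.erase_ne (Finset.ne_of_mem_erase hk)]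
  have hdvd := stepA (Finsupp.erase j γ) hγ'j (by rw [hsums]; omega)
  have hUzero : U j (Finsupp.erase j γ) (tr b (rd j σp f)) = 0 := by
    rw [stepB _ hγ'j]
    exact (Polynomial.modByMonic_eq_zero_iff_dvd hmon).mpr hdvd
  have hcoeff : coeff γ (tr a (rd j σp f)) ≠ 0 := MvPolynomial.mem_support_iff.mp hγmem
  apply hcoeff
  have hba : Function.update a j 0 + Pi.single j (a j) = a := by
    funext k
    by_cases hk : k = j
    · subst hk; simp
    · simp [Function.update_of_ne hk, Pi.single_eq_of_ne hk]
  have htra : tr a (rd j σp f) = tr (Pi.single j (a j)) (tr b (rd j σp f)) := by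
    rw [tr_tr, hb, hba]
  rw [htra, coeff_eq_U j γ, U_tr_single j _ hγ'j, hUzero, map_zero, Polynomial.coeff_zero]

end Main


section Main2

variable [IsDomain R] [DecidableEq R]

lemma base (S E : Fin n → Finset R) (ψ : Fin n → R → ℕ)
    (hψ : ∀ k, ∀ u ∈ S k, 0 < ψ k u) (t : ℕ) (m : Fin n)
    (f : MvPolynomial (Fin n) R) (w : Fin n → R) (hw : ∀ k, w k ∈ S k)
    (hfw : eval w f ≠ 0)
    (hvan : ∀ a : Fin n → R, (∀ k, a k ∈ S k) → (∃ k, a k ∉ E k) → Van ψ t f a) :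
    t * (∑ u ∈ S m \ E m, ψ m u) ≤ f.totalDegree := by
  classical
  set w' := Function.update w m 0 with hw'
  set g := U m 0 (tr w' f) with hg
  have h0m : (0 : Fin n →₀ ℕ) m = 0 := rfl
  have htaylor : ∀ c : R, Polynomial.taylor c g = U m 0 (tr (Function.update w m c) f) := by
    intro c
    rw [hg, ← U_tr_single m 0 h0m c, tr_tr, hw', update_eq_add_single]
  have hgeval : g.eval (w m) = eval w f := by
    calc g.eval (w m) = (Polynomial.taylor (w m) g).coeff 0 :=
          (Polynomial.taylor_coeff_zero (w m) g).symm
      _ = (U m 0 (tr w f)).coeff 0 := by rw [htaylor (w m), Function.update_eq_self]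
      _ = coeff (0 + Finsupp.single m 0) (tr w f) := U_coeff _ _ _ _
      _ = eval w f := by
          rw [Finsupp.single_zero, add_zero, ← MvPolynomial.constantCoeff_eq, constantCoeff_tr]
  have hgne : g ≠ 0 := fun h0 => hfw (by rw [← hgeval, h0, Polynomial.eval_zero])
  have hdvd : ∀ u ∈ S m \ E m, (Polynomial.X - Polynomial.C u) ^ (t * ψ m u) ∣ g := by
    intro u hu
    apply X_sub_C_pow_dvd_of_taylor
    intro d hd
    rw [htaylor u, U_coeff, zero_add]
    by_contra hc
    set a := Function.update w m u with ha
    have hmem := MvPolynomial.mem_support_iff.mpr hc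
    have hvana : Van ψ t f a := by
      refine hvan a (fun k => ?_) ⟨m, ?_⟩
      · by_cases hk : k = m
        · subst hk; rw [ha, Function.update_self]; exact (Finset.mem_sdiff.mp hu).1
        · rw [ha, Function.update_of_ne hk]; exact hw k
      · rw [ha, Function.update_self]; exact (Finset.mem_sdiff.mp hu).2
    have hge := hvana _ hmem
    have hsum : (∑ k, (Finsupp.single m d) k / ψ k (a k)) = d / ψ m u := by
      rw [← Finset.sum_erase_add _ _ (Finset.mem_univ m)]
      have hz : ∀ k ∈ Finset.univ.erase m, (Finsupp.single m d) k / ψ k (a k) = 0 := by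
        intro k hk
        rw [Finsupp.single_eq_of_ne' (fun he => (Finset.ne_of_mem_erase hk) he.symm), Nat.zero_div]
      rw [Finset.sum_eq_zero hz, Nat.zero_add, Finsupp.single_eq_same, ha, Function.update_self]
    rw [hsum] at hge
    have := (Nat.le_div_iff_mul_le (hψ m u (Finset.mem_sdiff.mp hu).1)).mp hge
    omega
  have hproddvd := prod_X_sub_C_pow_dvd (S m \ E m) (fun u => t * ψ m u) g hdvd
  have hprodnatdeg : (∏ u ∈ S m \ E m, (Polynomial.X - Polynomial.C u) ^ (t * ψ m u)).natDegree
      = t * ∑ u ∈ S m \ E m, ψ m u := by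
    rw [Polynomial.natDegree_prod, Finset.mul_sum]
    · apply Finset.sum_congr rfl
      intro u _
      rw [Polynomial.natDegree_pow, Polynomial.natDegree_X_sub_C, mul_one]
    · intro u _; exact ((Polynomial.monic_X_sub_C u).pow _).ne_zero
  have h5 := Polynomial.natDegree_le_of_dvd hproddvd hgne
  rw [hprodnatdeg] at h5
  have h6 : g.natDegree ≤ f.totalDegree := by
    have hcoeff : g.coeff g.natDegree ≠ 0 := by
      rw [← Polynomial.leadingCoeff]
      exact Polynomial.leadingCoeff_ne_zero.mpr hgne
    rw [hg, U_coeff, zero_add] at hcoeff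
    have hmem := MvPolynomial.mem_support_iff.mpr hcoeff
    have hle := MvPolynomial.le_totalDegree hmem
    rw [Finsupp.sum_single_index rfl, totalDegree_tr] at hle
    exact hle
  omega

end Main2


section Main3

variable [IsDomain R] [DecidableEq R]

lemma hall_case (S E : Fin n → Finset R) (ψ : Fin n → R → ℕ)
    (hψ : ∀ k, ∀ u ∈ S k, 0 < ψ k u) (t : ℕ) (ht : 1 ≤ t) (m : Fin n)
    (hall : ∀ k, k ≠ m → S k \ E k = ∅)
    (f : MvPolynomial (Fin n) R) (w : Fin n → R) (hw : ∀ k, w k ∈ S k)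
    (hfw : eval w f ≠ 0)
    (hvan : ∀ a : Fin n → R, (∀ k, a k ∈ S k) → (∃ k, a k ∉ E k) → Van ψ t f a) :
    (t - 1) * (∑ u ∈ S m \ E m, ψ m u) + ∑ k, ∑ u ∈ S k \ E k, ψ k u ≤ f.totalDegree := by
  have hz : (∑ k ∈ Finset.univ.erase m, ∑ u ∈ S k \ E k, ψ k u) = 0 :=
    Finset.sum_eq_zero (fun k hk => by
      rw [hall k (Finset.ne_of_mem_erase hk), Finset.sum_empty])
  have hsplit : (∑ k, ∑ u ∈ S k \ E k, ψ k u)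
      = (∑ k ∈ Finset.univ.erase m, ∑ u ∈ S k \ E k, ψ k u) + ∑ u ∈ S m \ E m, ψ m u :=
    (Finset.sum_erase_add _ _ (Finset.mem_univ m)).symm
  have hb := base S E ψ hψ t m f w hw hfw hvan
  rw [hsplit, hz, Nat.zero_add]
  have ht' : t - 1 + 1 = t := by omega
  calc (t - 1) * (∑ u ∈ S m \ E m, ψ m u) + ∑ u ∈ S m \ E m, ψ m u
      = (t - 1 + 1) * (∑ u ∈ S m \ E m, ψ m u) := by ring
    _ = t * (∑ u ∈ S m \ E m, ψ m u) := by rw [ht']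
    _ ≤ f.totalDegree := hb

theorem thmA (t : ℕ) (ht : 1 ≤ t) (m : Fin n) :
    ∀ (N : ℕ) (S E : Fin n → Finset R), (∀ k, E k ⊆ S k) →
    ∀ ψ : Fin n → R → ℕ, (∀ k, ∀ u ∈ S k, 0 < ψ k u) →
    (∑ k ∈ Finset.univ.erase m, ∑ u ∈ S k \ E k, ψ k u) ≤ N →
    ∀ (f : MvPolynomial (Fin n) R) (w : Fin n → R), (∀ k, w k ∈ S k) → eval w f ≠ 0 →
    (∀ a : Fin n → R, (∀ k, a k ∈ S k) → (∃ k, a k ∉ E k) → Van ψ t f a) →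
    (t - 1) * (∑ u ∈ S m \ E m, ψ m u) + ∑ k, ∑ u ∈ S k \ E k, ψ k u ≤ f.totalDegree := by
  intro N
  induction N with
  | zero =>
    intro S E hE ψ hψ hN f w hw hfw hvan
    by_cases hall : ∀ k, k ≠ m → S k \ E k = ∅
    · exact hall_case S E ψ hψ t ht m hall f w hw hfw hvan
    · exfalso
      push_neg at hall
      obtain ⟨j, hjm, hjne⟩ := hall
      obtain ⟨v0, hv0⟩ := hjne
      have h1 : 1 ≤ ∑ u ∈ S j \ E j, ψ j u :=
        le_trans (hψ j v0 (Finset.mem_sdiff.mp hv0).1)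
          (Finset.single_le_sum (fun _ _ => Nat.zero_le _) hv0)
      have h2 : (∑ u ∈ S j \ E j, ψ j u) ≤ ∑ k ∈ Finset.univ.erase m, ∑ u ∈ S k \ E k, ψ k u :=
        Finset.single_le_sum (f := fun k => ∑ u ∈ S k \ E k, ψ k u)
          (fun _ _ => Nat.zero_le _) (Finset.mem_erase.mpr ⟨hjm, Finset.mem_univ j⟩)
      omega
  | succ N ih =>
    intro S E hE ψ hψ hN f w hw hfw hvan
    by_cases hall : ∀ k, k ≠ m → S k \ E k = ∅
    · exact hall_case S E ψ hψ t ht m hall f w hw hfw hvan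
    push_neg at hall
    obtain ⟨j, hjm, hjne⟩ := hall
    set V := S j \ E j with hV
    set σp := ∏ v ∈ V, (Polynomial.X - Polynomial.C v) ^ ψ j v with hσ
    have hψV : ∀ v ∈ V, 0 < ψ j v := fun v hv => hψ j v (Finset.mem_sdiff.mp hv).1
    have hWpos : 1 ≤ ∑ v ∈ V, ψ j v := by
      obtain ⟨v0, hv0⟩ := hjne
      calc 1 ≤ ψ j v0 := hψV v0 hv0
        _ ≤ ∑ v ∈ V, ψ j v := Finset.single_le_sum (fun _ _ => Nat.zero_le _) hv0
    have hmon : σp.Monic :=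
      Polynomial.monic_prod_of_monic _ _ (fun v _ => (Polynomial.monic_X_sub_C v).pow _)
    have hdeg : σp.natDegree = ∑ v ∈ V, ψ j v := by
      rw [hσ, Polynomial.natDegree_prod]
      · apply Finset.sum_congr rfl
        intro v _
        rw [Polynomial.natDegree_pow, Polynomial.natDegree_X_sub_C, mul_one]
      · intro v _
        exact ((Polynomial.monic_X_sub_C v).pow _).ne_zero
    have hwE : ∀ k, w k ∈ E k := by
      by_contra hcon
      push_neg at hcon
      exact hfw (eval_vanish_of_van ht (hvan w hw hcon))
    have hvanV : ∀ v ∈ V, ∀ a : Fin n → R, (∀ k, k ≠ j → a k ∈ S k) → a j = v →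
        Van ψ t f a := by
      intro v hv a ha haj
      refine hvan a (fun k => ?_) ⟨j, by rw [haj]; exact (Finset.mem_sdiff.mp hv).2⟩
      by_cases hk : k = j
      · subst hk; rw [haj]; exact (Finset.mem_sdiff.mp hv).1
      · exact ha k hk
    have hρ := rd_high j S E ψ t f hvanV hWpos hψV
    set ρ := rd j σp f with hρdef
    set q := qd j σp f with hqdef
    have hqr : emb j σp * q + ρ = f := qd_add_rd hmon
    have hevalρ : eval w ρ = 0 := by
      apply eval_eq_zero_of_zero_not_mem_support
      intro h0
      have h1 := hρ w (fun k _ => hw k) 0 h0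
      simp at h1
      omega
    have hevalq : eval w q ≠ 0 := by
      intro h0
      apply hfw
      rw [← hqr, map_add, map_mul, hevalρ, h0, mul_zero, zero_add]
    have hqne : q ≠ 0 := fun h0 => hevalq (by rw [h0, map_zero])
    set S' := Function.update S j (E j) with hS'
    have hS'sub : ∀ k, S' k ⊆ S k := fun k => by
      by_cases hk : k = j
      · subst hk; rw [hS', Function.update_self]; exact hE _
      · rw [hS', Function.update_of_ne hk]
    have hE' : ∀ k, E k ⊆ S' k := fun k => by
      by_cases hk : k = j
      · subst hk; rw [hS', Function.update_self]
      · rw [hS', Function.update_of_ne hk]; exact hE k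
    have hψ' : ∀ k, ∀ u ∈ S' k, 0 < ψ k u := fun k u hu => hψ k u (hS'sub k hu)
    have hw' : ∀ k, w k ∈ S' k := fun k => hE' k (hwE k)
    have hvanq : ∀ a : Fin n → R, (∀ k, a k ∈ S' k) → (∃ k, a k ∉ E k) → Van ψ t q a := by
      intro a ha hex
      have haS : ∀ k, a k ∈ S k := fun k => hS'sub k (ha k)
      have hajE : a j ∈ E j := by
        have := ha j
        rwa [hS', Function.update_self] at this
      have hvf : Van ψ t f a := hvan a haS hex
      have hvρ : ∀ γ ∈ (tr a ρ).support, t ≤ ∑ k, γ k / ψ k (a k) := by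
        intro γ hγ
        have h1 := hρ a (fun k _ => haS k) γ hγ
        refine le_trans h1 (Finset.sum_le_sum_of_subset (Finset.erase_subset _ _))
      have hprod : ∀ γ ∈ (tr a (emb j σp) * tr a q).support,
          ¬ ((∑ k, γ k / ψ k (a k)) < t) := by
        intro γ hγ
        have hsub : tr a (emb j σp) * tr a q = tr a f - tr a ρ := by
          rw [← map_mul, eq_sub_iff_add_eq, ← map_add, hqr]
        rw [hsub] at hγ
        rcases Finset.mem_union.mp (MvPolynomial.support_sub _ _ _ hγ) with h | h
        · exact not_lt.mpr (hvf γ h)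
        · exact not_lt.mpr (hvρ γ h)
      have hcc : constantCoeff (tr a (emb j σp)) ≠ 0 := by
        rw [constantCoeff_tr, eval_emb, hσ, Polynomial.eval_prod]
        rw [Finset.prod_ne_zero_iff]
        intro v hv
        simp only [Polynomial.eval_pow, Polynomial.eval_sub, Polynomial.eval_X,
          Polynomial.eval_C]
        apply pow_ne_zero
        apply sub_ne_zero.mpr
        intro he
        exact (Finset.mem_sdiff.mp hv).2 (he ▸ hajE)
      intro γ hγ
      by_contra hlow
      push_neg at hlow
      refine (support_mul_avoid (tr a (emb j σp)) (tr a q)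
        (fun γ => (∑ k, γ k / ψ k (a k)) < t) ?_ hprod hcc γ hγ) hlow
      intro γ1 δ1 hγ1 hle
      refine lt_of_le_of_lt ?_ hγ1
      apply Finset.sum_le_sum
      intro k _
      exact Nat.div_le_div_right (Finsupp.le_def.mp hle k)
    have hjmem : j ∈ Finset.univ.erase m := Finset.mem_erase.mpr ⟨hjm, Finset.mem_univ j⟩
    have hSj' : S' j \ E j = ∅ := by
      rw [hS', Function.update_self, Finset.sdiff_self]
    have hS'eq : ∀ k, k ≠ j → S' k \ E k = S k \ E k := fun k hk => by
      rw [hS', Function.update_of_ne hk]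
    have hmeasures : (∑ k ∈ Finset.univ.erase m, ∑ u ∈ S' k \ E k, ψ k u) + (∑ v ∈ V, ψ j v)
        = ∑ k ∈ Finset.univ.erase m, ∑ u ∈ S k \ E k, ψ k u := by
      rw [← Finset.sum_erase_add _ _ hjmem, ← Finset.sum_erase_add (Finset.univ.erase m)
        (fun k => ∑ u ∈ S k \ E k, ψ k u) hjmem]
      rw [hSj', Finset.sum_empty, Nat.add_zero]
      congr 1
      apply Finset.sum_congr rfl
      intro k hk
      rw [hS'eq k (Finset.ne_of_mem_erase hk)]
    have hmeas' : (∑ k ∈ Finset.univ.erase m, ∑ u ∈ S' k \ E k, ψ k u) ≤ N := by omega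
    have IH := ih S' E hE' ψ hψ' hmeas' q w hw' hevalq hvanq
    have hdegq : q.totalDegree + σp.natDegree ≤ f.totalDegree := by
      have hne : q.support.Nonempty := MvPolynomial.support_nonempty.mpr hqne
      obtain ⟨δ, hδmem, hδeq⟩ := Finset.exists_mem_eq_sup q.support hne
        (fun δ => δ.sum fun _ e => e)
      have hq : q.totalDegree = δ.sum fun _ e => e := hδeq
      rw [hq]
      exact qd_supp hmon hδmem
    have hsum_univ : (∑ k, ∑ u ∈ S' k \ E k, ψ k u) + (∑ v ∈ V, ψ j v)
        = ∑ k, ∑ u ∈ S k \ E k, ψ k u := by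
      rw [← Finset.sum_erase_add _ _ (Finset.mem_univ j), ← Finset.sum_erase_add Finset.univ
        (fun k => ∑ u ∈ S k \ E k, ψ k u) (Finset.mem_univ j)]
      rw [hSj', Finset.sum_empty, Nat.add_zero]
      congr 1
      apply Finset.sum_congr rfl
      intro k hk
      rw [hS'eq k (Finset.ne_of_mem_erase hk)]
    have hSm : S' m \ E m = S m \ E m := hS'eq m (fun he => hjm he.symm)
    rw [hSm] at IH
    calc (t - 1) * (∑ u ∈ S m \ E m, ψ m u) + ∑ k, ∑ u ∈ S k \ E k, ψ k u
        = ((t - 1) * (∑ u ∈ S m \ E m, ψ m u) + ∑ k, ∑ u ∈ S' k \ E k, ψ k u)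
          + (∑ v ∈ V, ψ j v) := by omega
      _ ≤ q.totalDegree + (∑ v ∈ V, ψ j v) := Nat.add_le_add_right IH _
      _ = q.totalDegree + σp.natDegree := by rw [hdeg]
      _ ≤ f.totalDegree := hdegq

end Main3


end Stmt18

open Stmt18

theorem stmt18 {R : Type*} [CommRing R] [IsDomain R] [DecidableEq R] {n : ℕ}
    (S E : Fin n → Finset R) (hE : ∀ k, E k ⊆ S k)
    (ψ : Fin n → R → ℕ) (hψ : ∀ k, ∀ u ∈ S k, 0 < ψ k u)
    {L : Type*} [Fintype L] (H : L → Set (Fin n → R))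
    (hH : ∀ l : L, ∃ ρ : MvPolynomial (Fin n) R, ρ.totalDegree = 1 ∧
      H l = {u : Fin n → R | eval u ρ = 0})
    (hnc : ∃ w ∈ Fintype.piFinset S, ∀ l : L, w ∉ H l)
    (t : ℕ) (ht : 1 ≤ t)
    (hcov : ∀ a ∈ Fintype.piFinset S, (∃ i, a i ∉ E i) →
      ∀ β : Fin n →₀ ℕ, (∑ i, β i / ψ i (a i)) ≤ t - 1 →
        (∑ i, β i) + 1 ≤ Nat.card {l : L // a ∈ H l}) :
    ∀ m : Fin n,
      (t - 1) * (∑ u ∈ S m \ E m, ψ m u) + (∑ k, ∑ u ∈ S k \ E k, ψ k u)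
        ≤ Fintype.card L := by
  classical
  intro m
  obtain ⟨w, hwgrid, hwnc⟩ := hnc
  have hw : ∀ k, w k ∈ S k := Fintype.mem_piFinset.mp hwgrid
  choose ρp hρdeg hρset using hH
  set f := ∏ l ∈ Finset.univ, ρp l with hf
  have hdeg : f.totalDegree ≤ Fintype.card L := by
    refine le_trans (totalDegree_finset_prod _ _) (le_of_eq ?_)
    calc (∑ l ∈ Finset.univ, (ρp l).totalDegree) = ∑ l ∈ Finset.univ, 1 :=
          Finset.sum_congr rfl (fun l _ => hρdeg l)
      _ = Fintype.card L := by simp [Finset.card_univ]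
  have hfw : eval w f ≠ 0 := by
    rw [hf, map_prod, Finset.prod_ne_zero_iff]
    intro l _
    intro h0
    apply hwnc l
    rw [hρset l]
    exact h0
  have hvan : ∀ a : Fin n → R, (∀ k, a k ∈ S k) → (∃ k, a k ∉ E k) → Van ψ t f a := by
    intro a haS hex γ hγmem
    by_contra hlt
    push_neg at hlt
    set cov := Finset.univ.filter (fun l => a ∈ H l) with hcovdef
    have hcard : Nat.card {l : L // a ∈ H l} = cov.card := by
      rw [Nat.card_eq_fintype_card, Fintype.card_subtype]
    have hsplit : f = (∏ l ∈ cov, ρp l) * ∏ l ∈ Finset.univ.filter (fun l => ¬ a ∈ H l), ρp l := by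
      rw [hf, Finset.prod_filter_mul_prod_filter_not]
    rw [hsplit, map_mul] at hγmem
    obtain ⟨γ1, hγ1, γ2, hγ2, hγsum⟩ :=
      Finset.mem_add.mp (MvPolynomial.support_mul _ _ hγmem)
    rw [map_prod] at hγ1
    have hγ1card : cov.card ≤ γ1.sum fun _ e => e := by
      refine support_prod_card cov (fun l => tr a (ρp l)) ?_ γ1 hγ1
      intro l hl
      rw [constantCoeff_tr]
      have hal : a ∈ H l := (Finset.mem_filter.mp hl).2
      rw [hρset l] at hal
      exact hal
    have hβ := hcov a (Fintype.mem_piFinset.mpr haS) hex γ (by omega)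
    rw [hcard] at hβ
    have hγeq : (γ.sum fun _ e => e) = ∑ i, γ i :=
      Finsupp.sum_fintype _ _ (fun _ => rfl)
    have hγge : (γ.sum fun _ e => e) ≥ cov.card := by
      rw [← hγsum, sumdeg_add]
      omega
    omega
  have hthm := thmA t ht m (∑ k ∈ Finset.univ.erase m, ∑ u ∈ S k \ E k, ψ k u)
    S E hE ψ hψ (le_refl _) f w hw hfw hvan
  exact le_trans hthm hdeg
end

section
/- (Generalized Alon–Füredi theorem) Let R be a commutative ring and S_1,…,S_n nonempty finite subsets of R each satisfying Condition (D). Let β ∈ ℕ^n with β_i ≤ |S_i| − 1 for all i, and let f ∈ R[x_1,…,x_n] be nonzero with α ≤ β componentwise for every α ∈ supp(f). Then there exists μ ∈ ℕ^n with |S_i| − β_i ≤ μ_i ≤ |S_i| for all i, ∑_{k=1}^n μ_k = (∑_{k=1}^n |S_k|) − deg(f), and |{v ∈ ∏S_i : f(v) ≠ 0}| ≥ ∏_{k=1}^n μ_k. -/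
open MvPolynomial

attribute [local instance] Classical.propDecidable

private lemma AF_roots {R : Type*} [CommRing R] (S : Finset R)
    (hD : ∀ a ∈ S, ∀ b ∈ S, a ≠ b → (b - a) ∈ nonZeroDivisors R) :
    ∀ (N : ℕ) (p : Polynomial R), p ≠ 0 → p.natDegree ≤ N →
      (S.filter fun a => p.eval a = 0).card ≤ p.natDegree := by
  have peel : ∀ (p : Polynomial R), p ≠ 0 → ∀ a ∈ S, p.eval a = 0 →
      ∃ q : Polynomial R, q ≠ 0 ∧ p.natDegree = q.natDegree + 1 ∧
        (S.filter fun b => p.eval b = 0) ⊆ insert a (S.filter fun b => q.eval b = 0) := by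
    intro p hp a ha hroot
    obtain ⟨q, hq⟩ := (Polynomial.dvd_iff_isRoot).mpr hroot
    have hqne : q ≠ 0 := by rintro rfl; simp at hq; exact hp hq
    refine ⟨q, hqne, ?_, ?_⟩
    · haveI : Nontrivial R := nontrivial_of_ne _ _ (Polynomial.leadingCoeff_ne_zero.mpr hp)
      have h1 : (Polynomial.X - Polynomial.C a).leadingCoeff * q.leadingCoeff ≠ 0 := by
        rw [Polynomial.leadingCoeff_X_sub_C, one_mul]
        exact Polynomial.leadingCoeff_ne_zero.mpr hqne
      rw [hq, Polynomial.natDegree_mul' h1, Polynomial.natDegree_X_sub_C, add_comm]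
    · intro b hb
      rw [Finset.mem_filter] at hb
      obtain ⟨hbS, hbe⟩ := hb
      by_cases hba : b = a
      · rw [hba]; exact Finset.mem_insert_self a _
      · refine Finset.mem_insert_of_mem (Finset.mem_filter.mpr ⟨hbS, ?_⟩)
        have : (b - a) * q.eval b = 0 := by
          rw [← hbe, hq]; simp [Polynomial.eval_mul]
        have hnzd := hD a ha b hbS (fun h => hba h.symm)
        have h2 : q.eval b * (b - a) = 0 := by rw [mul_comm]; exact this
        exact (mem_nonZeroDivisors_iff.mp hnzd).2 _ h2
  intro N
  induction N with
  | zero =>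
    intro p hp hdeg
    rcases Finset.eq_empty_or_nonempty (S.filter fun a => p.eval a = 0) with he | hne
    · simp [he]
    · obtain ⟨a, ha⟩ := hne
      rw [Finset.mem_filter] at ha
      obtain ⟨q, _, hdq, _⟩ := peel p hp a ha.1 ha.2
      omega
  | succ N ih =>
    intro p hp hdeg
    rcases Finset.eq_empty_or_nonempty (S.filter fun a => p.eval a = 0) with he | hne
    · simp [he]
    · obtain ⟨a, ha⟩ := hne
      rw [Finset.mem_filter] at ha
      obtain ⟨q, hqne, hdq, hsub⟩ := peel p hp a ha.1 ha.2
      have hle := Finset.card_le_card hsub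
      have hins := Finset.card_insert_le a (S.filter fun b => q.eval b = 0)
      have hq := ih q hqne (by omega)
      omega

private lemma AF_adjust : ∀ (n : ℕ) (L U : Fin n → ℕ), (∀ i, L i ≤ U i) →
    ∀ s : ℕ, (∑ i, L i) ≤ s → s ≤ ∑ i, U i →
    ∃ μ : Fin n → ℕ, (∀ i, L i ≤ μ i ∧ μ i ≤ U i) ∧ ∑ i, μ i = s := by
  intro n
  induction n with
  | zero =>
    intro L U _ s h1 h2
    simp only [Finset.univ_eq_empty, Finset.sum_empty] at h1 h2 ⊢
    exact ⟨fun i => i.elim0, fun i => i.elim0, by omega⟩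
  | succ n ih =>
    intro L U hLU s h1 h2
    rw [Fin.sum_univ_succ] at h1 h2
    set sl := ∑ i : Fin n, L (Fin.succ i) with hsl
    set su := ∑ i : Fin n, U (Fin.succ i) with hsu
    have hslsu : sl ≤ su := Finset.sum_le_sum fun i _ => hLU _
    have h0 : L 0 ≤ U 0 := hLU 0
    set μ0 := min (U 0) (s - sl) with hμ0
    have hA : sl ≤ s - μ0 := by omega
    have hB : s - μ0 ≤ su := by omega
    obtain ⟨ν, hν1, hν2⟩ := ih (fun i => L (Fin.succ i)) (fun i => U (Fin.succ i))
      (fun i => hLU _) (s - μ0) hA hB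
    refine ⟨Fin.cons μ0 ν, ?_, ?_⟩
    · intro i
      refine Fin.cases ?_ (fun j => ?_) i
      · simp only [Fin.cons_zero]; omega
      · simpa using hν1 j
    · rw [Fin.sum_univ_succ]
      simp only [Fin.cons_zero, Fin.cons_succ]
      omega

private lemma AF_aux {R : Type*} [CommRing R] : ∀ (n : ℕ) (S : Fin n → Finset R),
    (∀ k, ∀ a ∈ S k, ∀ b ∈ S k, a ≠ b → (b - a) ∈ nonZeroDivisors R) →
    ∀ (β : Fin n → ℕ), (∀ i, β i + 1 ≤ (S i).card) →
    ∀ (f : MvPolynomial (Fin n) R), f ≠ 0 →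
    (∀ α ∈ f.support, ∀ i, α i ≤ β i) →
    ∃ μ : Fin n → ℕ,
      (∀ i, (S i).card - β i ≤ μ i ∧ μ i ≤ (S i).card) ∧
      (∑ k, (S k).card) ≤ (∑ k, μ k) + f.totalDegree ∧
      (∏ k, μ k) ≤ ((Fintype.piFinset S).filter fun v => eval v f ≠ 0).card := by
  intro n
  induction n with
  | zero =>
    intro S hD β hβ f hf hsupp
    refine ⟨fun i => i.elim0, fun i => i.elim0, by simp, ?_⟩
    obtain ⟨r, rfl⟩ := MvPolynomial.C_surjective (Fin 0) f
    have hr : r ≠ 0 := fun h => hf (by rw [h, map_zero])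
    have hmem : (fun i : Fin 0 => i.elim0) ∈
        (Fintype.piFinset S).filter fun v => eval v (C r : MvPolynomial (Fin 0) R) ≠ 0 := by
      rw [Finset.mem_filter]
      exact ⟨Fintype.mem_piFinset.mpr fun i => i.elim0, by simpa using hr⟩
    simpa using Finset.card_pos.mpr ⟨_, hmem⟩
  | succ n ih =>
    intro S hD β hβ f hf hsupp
    set F := finSuccEquiv R n f with hF
    have hFne : F ≠ 0 := by
      simp only [hF, ne_eq, EmbeddingLike.map_eq_zero_iff]; exact hf
    set d := F.natDegree with hd
    set g := F.coeff d with hg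
    have hgne : g ≠ 0 := Polynomial.leadingCoeff_ne_zero.mpr hFne
    have hdβ : d ≤ β 0 := by
      rw [hd, hF, natDegree_finSuccEquiv]
      exact degreeOf_le_iff.mpr fun m hm => hsupp m hm 0
    have hsupp' : ∀ m ∈ g.support, ∀ i : Fin n, m i ≤ β (Fin.succ i) := by
      intro m hm i
      have hmem : m.cons d ∈ f.support := mem_support_coeff_finSuccEquiv.mp hm
      have := hsupp _ hmem (Fin.succ i)
      rwa [Finsupp.cons_succ] at this
    obtain ⟨ν, hν1, hν2, hν3⟩ := ih (fun i => S (Fin.succ i)) (fun k => hD k.succ)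
      (fun i => β (Fin.succ i)) (fun i => hβ _) g hgne hsupp'
    have hdeg : g.totalDegree + d ≤ f.totalDegree :=
      totalDegree_coeff_finSuccEquiv_add_le f d hgne
    -- counting
    set G := (Fintype.piFinset fun i => S (Fin.succ i)).filter (fun w => eval w g ≠ 0) with hG
    have key : ∀ w ∈ G, (S 0).card - d ≤
        ((S 0).filter fun y => eval (Fin.cons y w) f ≠ 0).card := by
      intro w hw
      rw [hG, Finset.mem_filter] at hw
      set p := F.map (eval w) with hp
      have hpd : p.coeff d = eval w g := by rw [hp, Polynomial.coeff_map, hg]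
      have hpne : p ≠ 0 := fun h => hw.2 (by rw [← hpd, h, Polynomial.coeff_zero])
      have hpdeg : p.natDegree ≤ d := Polynomial.natDegree_map_le
      have heval : ∀ y, eval (Fin.cons y w) f = p.eval y := fun y =>
        eval_eq_eval_mv_eval' w y f
      have hroots : ((S 0).filter fun y => p.eval y = 0).card ≤ d :=
        le_trans (AF_roots (S 0) (hD 0) d p hpne hpdeg) hpdeg
      have hsplit := Finset.card_filter_add_card_filter_not
        (s := S 0) (p := fun y => p.eval y = 0)
      have : ((S 0).filter fun y => eval (Fin.cons y w) f ≠ 0) =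
          ((S 0).filter fun y => ¬ p.eval y = 0) := by
        apply Finset.filter_congr; intro y _; simp [heval y]
      rw [this]
      omega
    set T := (Fintype.piFinset S).filter (fun v => eval v f ≠ 0) with hT
    set B := G.biUnion (fun w =>
      (((S 0).filter fun y => eval (Fin.cons y w) f ≠ 0)).image (fun y => (Fin.cons y w : Fin (n+1) → R))) with hB
    have hBT : B ⊆ T := by
      intro v hv
      rw [hB, Finset.mem_biUnion] at hv
      obtain ⟨w, hw, hv⟩ := hv
      rw [Finset.mem_image] at hv
      obtain ⟨y, hy, rfl⟩ := hv
      rw [Finset.mem_filter] at hy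
      rw [hG, Finset.mem_filter] at hw
      rw [hT, Finset.mem_filter]
      refine ⟨Fintype.mem_piFinset.mpr ?_, hy.2⟩
      intro i
      refine Fin.cases ?_ (fun j => ?_) i
      · simpa using hy.1
      · simpa using (Fintype.mem_piFinset.mp hw.1) j
    have hcardB : B.card = ∑ w ∈ G,
        (((S 0).filter fun y => eval (Fin.cons y w) f ≠ 0)).card := by
      rw [hB, Finset.card_biUnion]
      · refine Finset.sum_congr rfl fun w _ => ?_
        apply Finset.card_image_of_injective
        intro y y' h
        have := congrFun h 0
        simpa using this
      · intro w hw w' hw' hne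
        simp only [Finset.disjoint_left]
        intro v hv hv'
        rw [Finset.mem_image] at hv hv'
        obtain ⟨y, _, rfl⟩ := hv
        obtain ⟨y', _, h⟩ := hv'
        apply hne
        have := congrArg Fin.tail h
        rw [Fin.tail_cons, Fin.tail_cons] at this
        exact this.symm
    have hcount : G.card * ((S 0).card - d) ≤ T.card := by
      calc G.card * ((S 0).card - d) = ∑ _w ∈ G, ((S 0).card - d) := by
            rw [Finset.sum_const, smul_eq_mul]
        _ ≤ ∑ w ∈ G, (((S 0).filter fun y => eval (Fin.cons y w) f ≠ 0)).card :=
            Finset.sum_le_sum key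
        _ = B.card := hcardB.symm
        _ ≤ T.card := Finset.card_le_card hBT
    refine ⟨Fin.cons ((S 0).card - d) ν, ?_, ?_, ?_⟩
    · intro i
      refine Fin.cases ?_ (fun j => ?_) i
      · simp only [Fin.cons_zero]
        constructor <;> omega
      · simpa using hν1 j
    · rw [Fin.sum_univ_succ, Fin.sum_univ_succ]
      simp only [Fin.cons_zero, Fin.cons_succ]
      have h0 := hβ 0
      omega
    · rw [Fin.prod_univ_succ]
      simp only [Fin.cons_zero, Fin.cons_succ]
      calc ((S 0).card - d) * ∏ i : Fin n, ν i
          ≤ ((S 0).card - d) * G.card := Nat.mul_le_mul_left _ hν3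
        _ = G.card * ((S 0).card - d) := mul_comm _ _
        _ ≤ T.card := hcount

theorem stmt19 {R : Type*} [CommRing R] {n : ℕ}
    (S : Fin n → Finset R) (hS : ∀ i, (S i).Nonempty)
    (hD : ∀ k, ∀ a ∈ S k, ∀ b ∈ S k, a ≠ b → (b - a) ∈ nonZeroDivisors R)
    (β : Fin n →₀ ℕ) (hβ : ∀ i, β i ≤ (S i).card - 1)
    (f : MvPolynomial (Fin n) R) (hf : f ≠ 0)
    (hsupp : ∀ α ∈ f.support, α ≤ β) :
    ∃ μ : Fin n → ℕ,
      (∀ i, (S i).card - β i ≤ μ i ∧ μ i ≤ (S i).card) ∧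
      (∑ k, μ k) = (∑ k, (S k).card) - f.totalDegree ∧
      (∏ k, μ k) ≤ Set.ncard {v : Fin n → R | (∀ i, v i ∈ S i) ∧ eval v f ≠ 0} := by
  have hβ' : ∀ i, (β : Fin n → ℕ) i + 1 ≤ (S i).card := by
    intro i
    have := hS i
    have := Finset.card_pos.mpr (hS i)
    have := hβ i
    omega
  have hsupp' : ∀ α ∈ f.support, ∀ i, α i ≤ β i := fun α hα i => (hsupp α hα) i
  obtain ⟨U, hU1, hU2, hU3⟩ := AF_aux n S hD (fun i => β i) hβ' f hf hsupp'
  have hdegβ : f.totalDegree ≤ ∑ i, β i := by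
    rw [MvPolynomial.totalDegree]
    apply Finset.sup_le
    intro m hm
    have h1 : (m.sum fun _ e => e) = ∑ i, m i := by
      rw [Finsupp.sum_fintype]; intro; rfl
    rw [h1]
    exact Finset.sum_le_sum fun i _ => hsupp' m hm i
  have hsumβ : (∑ i, ((S i).card - β i)) + ∑ i, β i = ∑ i, (S i).card := by
    rw [← Finset.sum_add_distrib]
    refine Finset.sum_congr rfl fun i _ => ?_
    have := hβ' i; omega
  have hL1 : (∑ i, ((S i).card - β i)) ≤ (∑ k, (S k).card) - f.totalDegree := by omega
  have hL2 : (∑ k, (S k).card) - f.totalDegree ≤ ∑ k, U k := by omega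
  obtain ⟨μ, hμ1, hμ2⟩ := AF_adjust n (fun i => (S i).card - β i) U
    (fun i => (hU1 i).1) ((∑ k, (S k).card) - f.totalDegree) hL1 hL2
  refine ⟨μ, fun i => ⟨(hμ1 i).1, le_trans (hμ1 i).2 (hU1 i).2⟩, hμ2, ?_⟩
  have hprod : (∏ k, μ k) ≤ ∏ k, U k :=
    Finset.prod_le_prod' fun i _ => (hμ1 i).2
  have hset : {v : Fin n → R | (∀ i, v i ∈ S i) ∧ eval v f ≠ 0} =
      ↑((Fintype.piFinset S).filter fun v => eval v f ≠ 0) := by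
    ext v
    simp [Fintype.mem_piFinset]
  rw [hset, Set.ncard_coe_finset]
  exact le_trans hprod hU3
end
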